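/- Gap comparison in terms of the missingness process (part of the proof of Theorem 3): under the assumptions Var(X | {O=0} ∩ G) = Var(X | {O=0} ∩ Gᶜ) and μ_g^O > μ^O, the inequality Δ^{group}_g > Δ^{pop}_g holds if and only if F > R_F, i.e. ρ_g·σ_{X|G}·f(α_g, r_g, α_{¬g}) + ρ_{¬g}·σ_{X|Gᶜ}·f(α_{¬g}, 1−r_g, α_g) > ((1−r_g)·α_{¬g} − r_g·α_g)·(μ_g − μ_{¬g}). -/

import Mathlib

/-!
Let `m₁`, `m₀` be the means of `X` on the observed and the unobserved part of a group. Imputing a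
constant `t` on the unobserved part costs `Var + (t - m₀)²`, so the variances cancel in
`Δ^group_g - Δ^pop_g`; what is left is a difference of squares, and writing `μ^O` as the mixture
of `μ_g^O` and `μ_{¬g}^O` extracts the factor `μ_g^O - μ^O`. For binary `O`,
`Cov(O, X | G) = α_g (1 - α_g) (m₁ - m₀)`, which makes `F - R_F` a polynomial in the cell means,
and then `α_{¬g} (1 - r_g) (Δ^group_g - Δ^pop_g) = (μ_g^O - μ^O) (F - R_F)` with both factors
`α_{¬g} (1 - r_g)` and `μ_g^O - μ^O` positive.
-/

open MeasureTheory ProbabilityTheory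

/-- Covariance of two real random variables under the measure `μ`. -/
noncomputable def condCov {Ω : Type*} [MeasurableSpace Ω] (μ : Measure Ω) (O X : Ω → ℝ) : ℝ :=
  ∫ ω, (O ω - ∫ x, O x ∂μ) * (X ω - ∫ x, X x ∂μ) ∂μ

lemma MeasureTheory.MemLp.cond {Ω : Type*} [MeasurableSpace Ω] {μ : Measure Ω} {X : Ω → ℝ}
    {p : ENNReal} (hX : MemLp X p μ) (s : Set Ω) : MemLp X p μ[|s] := by
  rcases eq_or_ne (μ s) 0 with h | h
  · simp [cond_eq_zero_of_meas_eq_zero h]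
  · exact (hX.restrict s).smul_measure (ENNReal.inv_ne_top.2 h)

lemma integral_const_sub_sq_eq_variance_add {Ω : Type*} [MeasurableSpace Ω] {ν : Measure Ω}
    [IsProbabilityMeasure ν] {X : Ω → ℝ} (hX : MemLp X 2 ν) (t : ℝ) :
    ∫ ω, (t - X ω) ^ 2 ∂ν = variance X ν + (t - ∫ ω, X ω ∂ν) ^ 2 := by
  have hX1 : Integrable (fun ω ↦ 2 * t * X ω) ν := (hX.integrable one_le_two).const_mul _
  have hX2 : Integrable (fun ω ↦ X ω ^ 2) ν := hX.integrable_sq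
  calc ∫ ω, (t - X ω) ^ 2 ∂ν = ∫ ω, (t ^ 2 - 2 * t * X ω + X ω ^ 2) ∂ν := by
        congr with ω; ring
    _ = t ^ 2 - 2 * t * ∫ ω, X ω ∂ν + ∫ ω, X ω ^ 2 ∂ν := by
        have hlin : Integrable (fun ω ↦ t ^ 2 - 2 * t * X ω) ν := (integrable_const _).sub hX1
        rw [integral_add hlin hX2, integral_sub (integrable_const _) hX1, integral_const_mul]
        simp
    _ = variance X ν + (t - ∫ ω, X ω ∂ν) ^ 2 := by
        rw [variance_eq_sub hX]; simp only [Pi.pow_apply]; ring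

lemma sdiff_preimage_one_of_binary {Ω : Type*} {O : Ω → ℝ} (hO01 : ∀ ω, O ω = 0 ∨ O ω = 1)
    (s : Set Ω) : s \ O ⁻¹' {1} = O ⁻¹' {0} ∩ s := by
  ext ω
  rcases hO01 ω with h | h <;> simp [h, and_comm]

section CellMeans

variable {Ω : Type*} [MeasurableSpace Ω] {μ : Measure Ω} {s t : Set Ω} {O X : Ω → ℝ}

lemma setIntegral_mul_of_binary (hO : Measurable O) (hO01 : ∀ ω, O ω = 0 ∨ O ω = 1)
    (s : Set Ω) (X : Ω → ℝ) :
    ∫ ω in s, O ω * X ω ∂μ = ∫ ω in O ⁻¹' {1} ∩ s, X ω ∂μ := by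
  have hOX : (fun ω ↦ O ω * X ω) = (O ⁻¹' {1}).indicator X := by
    ext ω
    rcases hO01 ω with h | h <;> simp [h]
  rw [hOX, setIntegral_indicator (hO (measurableSet_singleton 1)), Set.inter_comm]

variable [IsFiniteMeasure μ]

lemma measureReal_mul_integral_cond (s : Set Ω) (X : Ω → ℝ) :
    μ.real s * ∫ ω, X ω ∂μ[|s] = ∫ ω in s, X ω ∂μ := by
  rcases eq_or_ne (μ s) 0 with h | h
  · simp [Measure.restrict_eq_zero.2 h, measureReal_def, h]
  · rw [ProbabilityTheory.cond, integral_smul_measure, smul_eq_mul, ENNReal.toReal_inv,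
      ← mul_assoc, ← measureReal_def, mul_inv_cancel₀ ((measureReal_ne_zero_iff).2 h), one_mul]

lemma measureReal_mul_integral_cond_eq_inter_add_sdiff (ht : MeasurableSet t)
    (hX : Integrable X μ) :
    μ.real s * ∫ ω, X ω ∂μ[|s] =
      μ.real (s ∩ t) * ∫ ω, X ω ∂μ[|s ∩ t] + μ.real (s \ t) * ∫ ω, X ω ∂μ[|s \ t] := by
  simp only [measureReal_mul_integral_cond]
  exact (integral_inter_add_sdiff ht hX.integrableOn).symm

lemma measureReal_preimage_one_inter_of_binary (hO : Measurable O)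
    (hO01 : ∀ ω, O ω = 0 ∨ O ω = 1) (s : Set Ω) :
    μ.real (O ⁻¹' {1} ∩ s) = (∫ ω, O ω ∂μ[|s]) * μ.real s := by
  rw [mul_comm, measureReal_mul_integral_cond]
  simpa using (setIntegral_mul_of_binary (μ := μ) hO hO01 s 1).symm

lemma measureReal_preimage_zero_inter_of_binary (hO : Measurable O)
    (hO01 : ∀ ω, O ω = 0 ∨ O ω = 1) (s : Set Ω) :
    μ.real (O ⁻¹' {0} ∩ s) = (1 - ∫ ω, O ω ∂μ[|s]) * μ.real s := by
  have hsplit := measureReal_inter_add_sdiff (μ := μ) (s := s) (hO (measurableSet_singleton 1))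
  rw [Set.inter_comm, sdiff_preimage_one_of_binary hO01,
    measureReal_preimage_one_inter_of_binary hO hO01] at hsplit
  linear_combination hsplit

lemma integral_cond_eq_add_of_binary (hO : Measurable O) (hO01 : ∀ ω, O ω = 0 ∨ O ω = 1)
    (hs : μ s ≠ 0) (hX : Integrable X μ) :
    ∫ ω, X ω ∂μ[|s] = (∫ ω, O ω ∂μ[|s]) * ∫ ω, X ω ∂μ[|O ⁻¹' {1} ∩ s] +
      (1 - ∫ ω, O ω ∂μ[|s]) * ∫ ω, X ω ∂μ[|O ⁻¹' {0} ∩ s] := by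
  have hsplit := measureReal_mul_integral_cond_eq_inter_add_sdiff (s := s)
    (hO (measurableSet_singleton 1)) hX
  rw [Set.inter_comm, sdiff_preimage_one_of_binary hO01,
    measureReal_preimage_one_inter_of_binary hO hO01,
    measureReal_preimage_zero_inter_of_binary hO hO01] at hsplit
  rw [← mul_right_inj' ((measureReal_ne_zero_iff).2 hs)]
  linear_combination hsplit

lemma integral_mul_cond_of_binary (hO : Measurable O) (hO01 : ∀ ω, O ω = 0 ∨ O ω = 1)
    (hs : μ s ≠ 0) :
    ∫ ω, O ω * X ω ∂μ[|s] = (∫ ω, O ω ∂μ[|s]) * ∫ ω, X ω ∂μ[|O ⁻¹' {1} ∩ s] := by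
  rw [← mul_right_inj' ((measureReal_ne_zero_iff).2 hs), measureReal_mul_integral_cond,
    setIntegral_mul_of_binary hO hO01, ← measureReal_mul_integral_cond,
    measureReal_preimage_one_inter_of_binary hO hO01]
  ring

lemma condCov_cond_of_binary (hO : Measurable O) (hO01 : ∀ ω, O ω = 0 ∨ O ω = 1)
    (hs : μ s ≠ 0) (hX : MemLp X 2 μ) :
    condCov μ[|s] O X = (∫ ω, O ω ∂μ[|s]) * (1 - ∫ ω, O ω ∂μ[|s]) *
      (∫ ω, X ω ∂μ[|O ⁻¹' {1} ∩ s] - ∫ ω, X ω ∂μ[|O ⁻¹' {0} ∩ s]) := by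
  have := cond_isProbabilityMeasure (μ := μ) hs
  have hO2 : MemLp O 2 μ[|s] :=
    MemLp.of_bound hO.aestronglyMeasurable 1 (Filter.Eventually.of_forall fun ω ↦ by
      rcases hO01 ω with h | h <;> simp [h])
  change covariance O X μ[|s] = _
  rw [covariance_eq_sub hO2 (hX.cond s), Pi.mul_def, integral_mul_cond_of_binary hO hO01 hs,
    integral_cond_eq_add_of_binary hO hO01 hs (hX.integrable one_le_two)]
  ring

lemma mul_integral_cond_preimage_one_of_binary (hO : Measurable O)
    (hO01 : ∀ ω, O ω = 0 ∨ O ω = 1) (ht : MeasurableSet t) (hX : Integrable X μ) :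
    ((∫ ω, O ω ∂μ[|t]) * μ.real t + (∫ ω, O ω ∂μ[|tᶜ]) * μ.real tᶜ) * ∫ ω, X ω ∂μ[|O ⁻¹' {1}] =
      (∫ ω, O ω ∂μ[|t]) * μ.real t * ∫ ω, X ω ∂μ[|O ⁻¹' {1} ∩ t] +
        (∫ ω, O ω ∂μ[|tᶜ]) * μ.real tᶜ * ∫ ω, X ω ∂μ[|O ⁻¹' {1} ∩ tᶜ] := by
  rw [← measureReal_preimage_one_inter_of_binary hO hO01,
    ← measureReal_preimage_one_inter_of_binary hO hO01, ← Set.sdiff_eq,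
    measureReal_inter_add_sdiff ht]
  exact measureReal_mul_integral_cond_eq_inter_add_sdiff ht hX

end CellMeans

lemma correlation_mul_std_mul_f_eq {α σ δ : ℝ} (hα0 : 0 < α) (hα1 : α < 1) (hσ : σ ≠ 0)
    (r β : ℝ) :
    α * (1 - α) * δ / (√(α * (1 - α)) * σ) * σ *
        (2 * β * (1 - r) / √(α * (1 - α)) - √((1 - α) / α) * (β * (1 - r) - α * r)) =
      δ * (2 * β * (1 - r) - (1 - α) * (β * (1 - r) - α * r)) := by
  have hv : 0 < α * (1 - α) := mul_pos hα0 (sub_pos.2 hα1)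
  have hsqrt : √((1 - α) / α) = √(α * (1 - α)) / α := by
    rw [show (1 - α) / α = α * (1 - α) / α ^ 2 by field_simp, Real.sqrt_div' _ (sq_nonneg α),
      Real.sqrt_sq hα0.le]
  have hsq : √(α * (1 - α)) ^ 2 = α * (1 - α) := Real.sq_sqrt hv.le
  have hsqrt_ne : √(α * (1 - α)) ≠ 0 := (Real.sqrt_pos.2 hv).ne'
  rw [hsqrt]
  field_simp
  linear_combination -2 * δ * β * (1 - r) * hsq

lemma mul_gap_difference_eq {r α β m1g m0g m1n m0n μO : ℝ}
    (hμO : (α * r + β * (1 - r)) * μO = α * r * m1g + β * (1 - r) * m1n) :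
    β * (1 - r) * (((m1g - m0g) ^ 2 - (μO - m0g) ^ 2) - ((m1n - m0n) ^ 2 - (μO - m0n) ^ 2)) =
      (m1g - μO) * ((m1g - m0g) * (2 * β * (1 - r) - (1 - α) * (β * (1 - r) - α * r)) +
        (m1n - m0n) * (2 * α * (1 - (1 - r)) - (1 - β) * (α * (1 - (1 - r)) - β * (1 - r))) -
        ((1 - r) * β - r * α) * ((α * m1g + (1 - α) * m0g) - (β * m1n + (1 - β) * m0n))) := by
  linear_combination (m1g + m1n - 2 * m0n) * hμO

theorem gap_comparison_missingness_general
    {Ω : Type*} [MeasurableSpace Ω] (μ : Measure Ω) [IsProbabilityMeasure μ]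
    (X O : Ω → ℝ) (G : Set Ω)
    (hOm : Measurable O) (hG : MeasurableSet G)
    (hX2 : MemLp X 2 μ)
    (hO01 : ∀ ω, O ω = 0 ∨ O ω = 1)
    (αg αng μg μng μgO μngO μO σXG σXnG ρg ρng rg
      LgGroup LngGroup LgPop LngPop ΔGroup ΔPop F RF : ℝ)
    (f : ℝ → ℝ → ℝ → ℝ)
    (hαg : αg = ∫ ω, O ω ∂(μ[|G]))
    (hαng : αng = ∫ ω, O ω ∂(μ[|Gᶜ]))
    (hμg : μg = ∫ ω, X ω ∂(μ[|G]))
    (hμng : μng = ∫ ω, X ω ∂(μ[|Gᶜ]))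
    (hμgO : μgO = ∫ ω, X ω ∂(μ[|O ⁻¹' {1} ∩ G]))
    (hμngO : μngO = ∫ ω, X ω ∂(μ[|O ⁻¹' {1} ∩ Gᶜ]))
    (hμO : μO = ∫ ω, X ω ∂(μ[|O ⁻¹' {1}]))
    (hρg : ρg = condCov (μ[|G]) O X / (Real.sqrt (αg * (1 - αg)) * σXG))
    (hρng : ρng = condCov (μ[|Gᶜ]) O X / (Real.sqrt (αng * (1 - αng)) * σXnG))
    (hrg : rg = (μ G).toReal)
    (hLgGroup : LgGroup = ∫ ω, (μgO - X ω) ^ 2 ∂(μ[|O ⁻¹' {0} ∩ G]))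
    (hLngGroup : LngGroup = ∫ ω, (μngO - X ω) ^ 2 ∂(μ[|O ⁻¹' {0} ∩ Gᶜ]))
    (hLgPop : LgPop = ∫ ω, (μO - X ω) ^ 2 ∂(μ[|O ⁻¹' {0} ∩ G]))
    (hLngPop : LngPop = ∫ ω, (μO - X ω) ^ 2 ∂(μ[|O ⁻¹' {0} ∩ Gᶜ]))
    (hΔGroup : ΔGroup = LgGroup - LngGroup)
    (hΔPop : ΔPop = LgPop - LngPop)
    (hf : ∀ a r b, f a r b =
      2 * b * (1 - r) / Real.sqrt (a * (1 - a)) -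
        Real.sqrt ((1 - a) / a) * (b * (1 - r) - a * r))
    (hF : F = ρg * σXG * f αg rg αng + ρng * σXnG * f αng (1 - rg) αg)
    (hRF : RF = ((1 - rg) * αng - rg * αg) * (μg - μng))
    (hr1 : rg < 1)
    (hαg0 : 0 < αg) (hαg1 : αg < 1)
    (hαng0 : 0 < αng) (hαng1 : αng < 1)
    (hσpos : 0 < σXG) (hσnpos : 0 < σXnG)
    (hpos0g : 0 < μ (O ⁻¹' {0} ∩ G))
    (hpos0ng : 0 < μ (O ⁻¹' {0} ∩ Gᶜ))
    (hmean : μgO > μO) :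
    ΔGroup > ΔPop ↔ F > RF := by
  have hX1 : Integrable X μ := hX2.integrable one_le_two
  have hμG : μ G ≠ 0 := (hpos0g.trans_le (measure_mono Set.inter_subset_right)).ne'
  have hμGc : μ Gᶜ ≠ 0 := (hpos0ng.trans_le (measure_mono Set.inter_subset_right)).ne'
  have hrG : μ.real G = rg := hrg.symm
  have hrGc : μ.real Gᶜ = 1 - rg := by rw [probReal_compl_eq_one_sub hG, hrG]
  set m0g := ∫ ω, X ω ∂μ[|O ⁻¹' {0} ∩ G]
  set m0n := ∫ ω, X ω ∂μ[|O ⁻¹' {0} ∩ Gᶜ]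
  have hμg' : μg = αg * μgO + (1 - αg) * m0g := by
    rw [hμg, hαg, hμgO]; exact integral_cond_eq_add_of_binary hOm hO01 hμG hX1
  have hμng' : μng = αng * μngO + (1 - αng) * m0n := by
    rw [hμng, hαng, hμngO]; exact integral_cond_eq_add_of_binary hOm hO01 hμGc hX1
  have hμO' : (αg * rg + αng * (1 - rg)) * μO = αg * rg * μgO + αng * (1 - rg) * μngO := by
    rw [← hrGc, ← hrG, hαg, hαng, hμO, hμgO, hμngO]
    exact mul_integral_cond_preimage_one_of_binary hOm hO01 hG hX1
  have hFg : ρg * σXG * f αg rg αng =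
      (μgO - m0g) * (2 * αng * (1 - rg) - (1 - αg) * (αng * (1 - rg) - αg * rg)) := by
    rw [hρg, condCov_cond_of_binary hOm hO01 hμG hX2, ← hαg, ← hμgO, hf]
    exact correlation_mul_std_mul_f_eq hαg0 hαg1 hσpos.ne' _ _
  have hFng : ρng * σXnG * f αng (1 - rg) αg = (μngO - m0n) *
      (2 * αg * (1 - (1 - rg)) - (1 - αng) * (αg * (1 - (1 - rg)) - αng * (1 - rg))) := by
    rw [hρng, condCov_cond_of_binary hOm hO01 hμGc hX2, ← hαng, ← hμngO, hf]
    exact correlation_mul_std_mul_f_eq hαng0 hαng1 hσnpos.ne' _ _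
  have hgap : ΔGroup - ΔPop =
      ((μgO - m0g) ^ 2 - (μO - m0g) ^ 2) - ((μngO - m0n) ^ 2 - (μO - m0n) ^ 2) := by
    have := cond_isProbabilityMeasure hpos0g.ne'
    have := cond_isProbabilityMeasure hpos0ng.ne'
    simp only [hΔGroup, hΔPop, hLgGroup, hLngGroup, hLgPop, hLngPop,
      integral_const_sub_sq_eq_variance_add (hX2.cond _)]
    ring
  have hfactor : αng * (1 - rg) * (ΔGroup - ΔPop) = (μgO - μO) * (F - RF) := by
    rw [hgap, hF, hFg, hFng, hRF, hμg', hμng']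
    exact mul_gap_difference_eq hμO'
  have hweight : 0 < αng * (1 - rg) := mul_pos hαng0 (sub_pos.2 hr1)
  rw [gt_iff_lt, gt_iff_lt, ← sub_pos, ← mul_pos_iff_of_pos_left hweight, hfactor,
    mul_pos_iff_of_pos_left (sub_pos.2 hmean), sub_pos]

/-- (Part of the proof of Theorem 3.) Under equal unobserved-data variances
and `μ_g^O > μ^O`, the inequality `Δ^group_g > Δ^pop_g` holds iff `F > R_F`. -/
theorem gap_comparison_missingness
    {Ω : Type*} [MeasurableSpace Ω] (μ : Measure Ω) [IsProbabilityMeasure μ]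
    (X O : Ω → ℝ) (G : Set Ω)
    (hXm : Measurable X) (hOm : Measurable O) (hG : MeasurableSet G)
    (hX2 : MemLp X 2 μ)
    (hO01 : ∀ ω, O ω = 0 ∨ O ω = 1)
    (αg αng μg μng μgO μngO μO σXG σXnG ρg ρng rg
      LgGroup LngGroup LgPop LngPop ΔGroup ΔPop F RF : ℝ)
    (f : ℝ → ℝ → ℝ → ℝ)
    (hαg : αg = ∫ ω, O ω ∂(μ[|G]))
    (hαng : αng = ∫ ω, O ω ∂(μ[|Gᶜ]))
    (hμg : μg = ∫ ω, X ω ∂(μ[|G]))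
    (hμng : μng = ∫ ω, X ω ∂(μ[|Gᶜ]))
    (hμgO : μgO = ∫ ω, X ω ∂(μ[|O ⁻¹' {1} ∩ G]))
    (hμngO : μngO = ∫ ω, X ω ∂(μ[|O ⁻¹' {1} ∩ Gᶜ]))
    (hμO : μO = ∫ ω, X ω ∂(μ[|O ⁻¹' {1}]))
    (hσXG : σXG = Real.sqrt (variance X (μ[|G])))
    (hσXnG : σXnG = Real.sqrt (variance X (μ[|Gᶜ])))
    (hρg : ρg = condCov (μ[|G]) O X / (Real.sqrt (αg * (1 - αg)) * σXG))
    (hρng : ρng = condCov (μ[|Gᶜ]) O X / (Real.sqrt (αng * (1 - αng)) * σXnG))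
    (hrg : rg = (μ G).toReal)
    (hLgGroup : LgGroup = ∫ ω, (μgO - X ω) ^ 2 ∂(μ[|O ⁻¹' {0} ∩ G]))
    (hLngGroup : LngGroup = ∫ ω, (μngO - X ω) ^ 2 ∂(μ[|O ⁻¹' {0} ∩ Gᶜ]))
    (hLgPop : LgPop = ∫ ω, (μO - X ω) ^ 2 ∂(μ[|O ⁻¹' {0} ∩ G]))
    (hLngPop : LngPop = ∫ ω, (μO - X ω) ^ 2 ∂(μ[|O ⁻¹' {0} ∩ Gᶜ]))
    (hΔGroup : ΔGroup = LgGroup - LngGroup)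
    (hΔPop : ΔPop = LgPop - LngPop)
    (hf : ∀ a r b, f a r b =
      2 * b * (1 - r) / Real.sqrt (a * (1 - a)) -
        Real.sqrt ((1 - a) / a) * (b * (1 - r) - a * r))
    (hF : F = ρg * σXG * f αg rg αng + ρng * σXnG * f αng (1 - rg) αg)
    (hRF : RF = ((1 - rg) * αng - rg * αg) * (μg - μng))
    (hr0 : 0 < rg) (hr1 : rg < 1)
    (hαg0 : 0 < αg) (hαg1 : αg < 1)
    (hαng0 : 0 < αng) (hαng1 : αng < 1)
    (hσpos : 0 < σXG) (hσnpos : 0 < σXnG)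
    (hpos1g : 0 < μ (O ⁻¹' {1} ∩ G)) (hpos0g : 0 < μ (O ⁻¹' {0} ∩ G))
    (hpos1ng : 0 < μ (O ⁻¹' {1} ∩ Gᶜ)) (hpos0ng : 0 < μ (O ⁻¹' {0} ∩ Gᶜ))
    (hvar : variance X (μ[|O ⁻¹' {0} ∩ G]) = variance X (μ[|O ⁻¹' {0} ∩ Gᶜ]))
    (hmean : μgO > μO) :
    ΔGroup > ΔPop ↔ F > RF :=
  gap_comparison_missingness_general μ X O G hOm hG hX2 hO01 αg αng μg μng μgO μngO μO σXG σXnG ρg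
    ρng rg LgGroup LngGroup LgPop LngPop ΔGroup ΔPop F RF f hαg hαng hμg hμng hμgO hμngO hμO hρg
    hρng hrg hLgGroup hLngGroup hLgPop hLngPop hΔGroup hΔPop hf hF hRF hr1 hαg0 hαg1 hαng0 hαng1
    hσpos hσnpos hpos0g hpos0ng hmean
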